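/- arXiv:2303.06899 — 6 statements merged into one kernel-verified Lean document; each statement's English description precedes it below -/
import Mathlib

section
/- For smooth functions φ, ψ on R^{1+3} with t > 0 and r = |x| > 0, the null form satisfies the pointwise bound |∂_α φ ∂^α ψ| ≲ (|t-r|/t)|∂φ||∂ψ| + Σ_{a=1}^3 (|\bar∂_a φ||∂ψ| + |∂φ||\bar∂_a ψ|), where |∂u|² = |∂_t u|² + Σ_a |∂_a u|² and \bar∂_a = ∂_a + (x_a/t)∂_t. -/
noncomputable section

abbrev E3 : Type := EuclideanSpace ℝ (Fin 3)

/-- time derivative ∂_t -/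
def pt (u : ℝ × E3 → ℝ) (p : ℝ × E3) : ℝ := fderiv ℝ u p (1, 0)

/-- spatial derivative ∂_a -/
def px (a : Fin 3) (u : ℝ × E3 → ℝ) (p : ℝ × E3) : ℝ :=
  fderiv ℝ u p (0, EuclideanSpace.single a 1)

/-- gradient norm |∂u| = (|∂_t u|² + Σ_a |∂_a u|²)^{1/2} -/
def Dn (u : ℝ × E3 → ℝ) (p : ℝ × E3) : ℝ :=
  Real.sqrt ((pt u p) ^ 2 + ∑ a, (px a u p) ^ 2)

/-- good derivative ∂̄_a = ∂_a + (x_a/t)∂_t -/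
def pb (a : Fin 3) (u : ℝ × E3 → ℝ) (p : ℝ × E3) : ℝ :=
  px a u p + p.2 a / p.1 * pt u p

lemma key_alg (t r : ℝ) (ht : 0 < t) (hr : 0 < r) (x Fx Gx : Fin 3 → ℝ) (Ft Gt DF DG : ℝ)
    (hx : ∑ a, x a ^ 2 = r ^ 2)
    (hFt : |Ft| ≤ DF) (hFx : ∀ a, |Fx a| ≤ DF)
    (hGt : |Gt| ≤ DG) (hGx : ∀ a, |Gx a| ≤ DG)
    (hDF : 0 ≤ DF) (hDG : 0 ≤ DG) :
    |(-(Ft * Gt) + ∑ a, Fx a * Gx a)| ≤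
      6 * (|t - r| / t * (DF * DG)
        + ∑ a, (|Fx a + x a / t * Ft| * DG + DF * |Gx a + x a / t * Gt|)) := by
  set ω : Fin 3 → ℝ := fun a => x a / r with hω
  have hω2 : ∑ a, ω a ^ 2 = 1 := by
    have h : ∑ a, ω a ^ 2 = (∑ a, x a ^ 2) / r ^ 2 := by
      rw [Finset.sum_div]; refine Finset.sum_congr rfl fun a _ => ?_
      simp [hω]; ring
    rw [h, hx]; field_simp
  have hxa : ∀ a, |x a| ≤ r := by
    intro a
    have h1 : x a ^ 2 ≤ r ^ 2 := by
      have h2 := Finset.single_le_sum (f := fun a => x a ^ 2) (fun i _ => sq_nonneg _)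
        (Finset.mem_univ a)
      simpa [hx] using h2
    nlinarith [sq_abs (x a), abs_nonneg (x a)]
  -- identity
  have hid : -(Ft * Gt) + ∑ a, Fx a * Gx a
      = (∑ a, (Fx a + ω a * Ft) * Gx a) - Ft * ∑ a, ω a * (Gx a + ω a * Gt) := by
    have e1 : ∑ a, (Fx a + ω a * Ft) * Gx a
        = (∑ a, Fx a * Gx a) + Ft * ∑ a, ω a * Gx a := by
      rw [Finset.mul_sum, ← Finset.sum_add_distrib]
      refine Finset.sum_congr rfl fun a _ => by ring
    have e2 : ∑ a, ω a * (Gx a + ω a * Gt)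
        = (∑ a, ω a * Gx a) + Gt := by
      have : ∑ a, ω a * (Gx a + ω a * Gt)
          = (∑ a, ω a * Gx a) + Gt * ∑ a, ω a ^ 2 := by
        rw [Finset.mul_sum, ← Finset.sum_add_distrib]
        refine Finset.sum_congr rfl fun a _ => by ring
      rw [this, hω2]; ring
    rw [e1, e2]; ring
  -- bounds on good derivatives
  have hGF : ∀ a, |Fx a + ω a * Ft| ≤ |Fx a + x a / t * Ft| + |t - r| / t * DF := by
    intro a
    have heq : Fx a + ω a * Ft = (Fx a + x a / t * Ft) + (x a / r * ((t - r) / t)) * Ft := by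
      simp only [hω]; field_simp; ring
    rw [heq]
    refine (abs_add_le _ _).trans (add_le_add_right ?_ _)
    rw [abs_mul, abs_mul, abs_div, abs_div, abs_of_pos hr, abs_of_pos ht]
    have h1 : |x a| / r ≤ 1 := (div_le_one hr).2 (hxa a)
    calc |x a| / r * (|t - r| / t) * |Ft| ≤ 1 * (|t - r| / t) * DF := by
          apply mul_le_mul (mul_le_mul_of_nonneg_right h1 (by positivity)) hFt (abs_nonneg _)
          positivity
      _ = |t - r| / t * DF := by ring
  have hGG : ∀ a, |Gx a + ω a * Gt| ≤ |Gx a + x a / t * Gt| + |t - r| / t * DG := by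
    intro a
    have heq : Gx a + ω a * Gt = (Gx a + x a / t * Gt) + (x a / r * ((t - r) / t)) * Gt := by
      simp only [hω]; field_simp; ring
    rw [heq]
    refine (abs_add_le _ _).trans (add_le_add_right ?_ _)
    rw [abs_mul, abs_mul, abs_div, abs_div, abs_of_pos hr, abs_of_pos ht]
    have h1 : |x a| / r ≤ 1 := (div_le_one hr).2 (hxa a)
    calc |x a| / r * (|t - r| / t) * |Gt| ≤ 1 * (|t - r| / t) * DG := by
          apply mul_le_mul (mul_le_mul_of_nonneg_right h1 (by positivity)) hGt (abs_nonneg _)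
          positivity
      _ = |t - r| / t * DG := by ring
  -- main estimate
  have hc : (0:ℝ) ≤ |t - r| / t := by positivity
  have step : |(-(Ft * Gt) + ∑ a, Fx a * Gx a)|
      ≤ (∑ a, |Fx a + ω a * Ft| * DG) + DF * ∑ a, |Gx a + ω a * Gt| := by
    rw [hid]
    refine (abs_sub _ _).trans (add_le_add ?_ ?_)
    · refine (Finset.abs_sum_le_sum_abs _ _).trans (Finset.sum_le_sum fun a _ => ?_)
      rw [abs_mul]
      exact mul_le_mul_of_nonneg_left (hGx a) (abs_nonneg _)
    · rw [abs_mul]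
      have hωle : ∀ a, |ω a| ≤ 1 := fun a => by
        rw [hω]; rw [abs_div, abs_of_pos hr]; exact (div_le_one hr).2 (hxa a)
      refine (mul_le_mul hFt (Finset.abs_sum_le_sum_abs _ _) (abs_nonneg _) hDF).trans ?_
      rw [Finset.mul_sum, Finset.mul_sum]
      refine Finset.sum_le_sum fun a _ => mul_le_mul_of_nonneg_left ?_ hDF
      rw [abs_mul]
      calc |ω a| * |Gx a + ω a * Gt| ≤ 1 * |Gx a + ω a * Gt| :=
            mul_le_mul_of_nonneg_right (hωle a) (abs_nonneg _)
        _ = |Gx a + ω a * Gt| := one_mul _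
  have step2 : (∑ a, |Fx a + ω a * Ft| * DG) + DF * ∑ a, |Gx a + ω a * Gt|
      ≤ (∑ a, (|Fx a + x a / t * Ft| * DG + DF * |Gx a + x a / t * Gt|))
        + 6 * (|t - r| / t * (DF * DG)) := by
    have s1 : ∑ a, |Fx a + ω a * Ft| * DG
        ≤ ∑ a, (|Fx a + x a / t * Ft| * DG + |t - r| / t * DF * DG) :=
      Finset.sum_le_sum fun a _ => by
        nlinarith [mul_le_mul_of_nonneg_right (hGF a) hDG]
    have s2 : DF * ∑ a, |Gx a + ω a * Gt|
        ≤ ∑ a, (DF * |Gx a + x a / t * Gt| + DF * (|t - r| / t * DG)) := by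
      rw [Finset.mul_sum]
      exact Finset.sum_le_sum fun a _ => by
        nlinarith [mul_le_mul_of_nonneg_left (hGG a) hDF]
    have e3 : ∑ (a : Fin 3), (|Fx a + x a / t * Ft| * DG + |t - r| / t * DF * DG)
        = (∑ a, |Fx a + x a / t * Ft| * DG) + 3 * (|t - r| / t * DF * DG) := by
      rw [Finset.sum_add_distrib, Finset.sum_const]; simp
    have e4 : ∑ (a : Fin 3), (DF * |Gx a + x a / t * Gt| + DF * (|t - r| / t * DG))
        = (∑ a, DF * |Gx a + x a / t * Gt|) + 3 * (DF * (|t - r| / t * DG)) := by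
      rw [Finset.sum_add_distrib, Finset.sum_const]; simp
    rw [e3] at s1; rw [e4] at s2
    have e5 : ∑ a, (|Fx a + x a / t * Ft| * DG + DF * |Gx a + x a / t * Gt|)
        = (∑ a, |Fx a + x a / t * Ft| * DG) + ∑ a, DF * |Gx a + x a / t * Gt| :=
      Finset.sum_add_distrib
    rw [e5]; nlinarith [s1, s2]
  have hsum : 0 ≤ ∑ a, (|Fx a + x a / t * Ft| * DG + DF * |Gx a + x a / t * Gt|) :=
    Finset.sum_nonneg fun a _ => by positivity
  calc |(-(Ft * Gt) + ∑ a, Fx a * Gx a)|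
      ≤ (∑ a, (|Fx a + x a / t * Ft| * DG + DF * |Gx a + x a / t * Gt|))
        + 6 * (|t - r| / t * (DF * DG)) := step.trans step2
    _ ≤ 6 * (|t - r| / t * (DF * DG)
        + ∑ a, (|Fx a + x a / t * Ft| * DG + DF * |Gx a + x a / t * Gt|)) := by linarith

/-- pointwise null form bound
|∂_α φ ∂^α ψ| ≲ (|t-r|/t)|∂φ||∂ψ| + Σ_a (|∂̄_a φ||∂ψ| + |∂φ||∂̄_a ψ|). -/
theorem null_form_pointwise_bound :
    ∃ C : ℝ, 0 < C ∧ ∀ (φ ψ : ℝ × E3 → ℝ), ContDiff ℝ (⊤ : ℕ∞) φ → ContDiff ℝ (⊤ : ℕ∞) ψ →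
      ∀ p : ℝ × E3, 0 < p.1 → 0 < ‖p.2‖ →
      |(-(pt φ p * pt ψ p) + ∑ a, px a φ p * px a ψ p)| ≤
        C * (|p.1 - ‖p.2‖| / p.1 * (Dn φ p * Dn ψ p)
          + ∑ a, (|pb a φ p| * Dn ψ p + Dn φ p * |pb a ψ p|)) := by
  refine ⟨6, by norm_num, fun φ ψ _ _ p ht hr => ?_⟩
  have hx : ∑ a, (p.2 a) ^ 2 = ‖p.2‖ ^ 2 := by
    rw [EuclideanSpace.norm_eq, Real.sq_sqrt (Finset.sum_nonneg fun i _ => by positivity)]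
    refine Finset.sum_congr rfl fun a _ => ?_
    rw [Real.norm_eq_abs, sq_abs]
  have hDnF : ∀ (u : ℝ × E3 → ℝ), 0 ≤ Dn u p := fun u => Real.sqrt_nonneg _
  have hpt : ∀ (u : ℝ × E3 → ℝ), |pt u p| ≤ Dn u p := by
    intro u
    have hs : 0 ≤ ∑ a, (px a u p) ^ 2 := Finset.sum_nonneg fun i _ => sq_nonneg _
    rw [← Real.sqrt_sq_eq_abs]
    unfold Dn
    exact Real.sqrt_le_sqrt (by linarith)
  have hpx : ∀ (a : Fin 3) (u : ℝ × E3 → ℝ), |px a u p| ≤ Dn u p := by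
    intro a u
    have h2 : (px a u p) ^ 2 ≤ ∑ b, (px b u p) ^ 2 := by
      simpa using Finset.single_le_sum (f := fun a => (px a u p) ^ 2)
        (fun i _ => sq_nonneg _) (Finset.mem_univ a)
    have h3 : 0 ≤ (pt u p) ^ 2 := sq_nonneg _
    rw [← Real.sqrt_sq_eq_abs]
    unfold Dn
    exact Real.sqrt_le_sqrt (by linarith)
  have key := key_alg p.1 ‖p.2‖ ht hr (fun a => p.2 a) (fun a => px a φ p)
    (fun a => px a ψ p) (pt φ p) (pt ψ p) (Dn φ p) (Dn ψ p) hx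
    (hpt φ) (fun a => hpx a φ) (hpt ψ) (fun a => hpx a ψ) (hDnF φ) (hDnF ψ)
  simpa [pb] using key
end
end

section
/- For smooth functions φ, ψ on R^{1+3} with t > 0, the null form satisfies |∂_α φ ∂^α ψ| ≲ (1/t)(|∂_t φ||L_0 ψ| + Σ_{a=1}^3 |L_a φ||∂_a ψ|), where L_0 = t∂_t + x^a ∂_a is the scaling field and L_a = x_a ∂_t + t ∂_a are Lorentz boosts. -/
noncomputable section

/-- scaling vector field L₀ = t∂_t + xᵃ∂_a -/
def L0 (u : ℝ × E3 → ℝ) (p : ℝ × E3) : ℝ := p.1 * pt u p + ∑ a, p.2 a * px a u p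

/-- Lorentz boost L_a = x_a ∂_t + t ∂_a -/
def La (a : Fin 3) (u : ℝ × E3 → ℝ) (p : ℝ × E3) : ℝ := p.2 a * pt u p + p.1 * px a u p

/-- |∂_α φ ∂^α ψ| ≲ (1/t)(|∂_t φ||L₀ψ| + Σ_a |L_a φ||∂_a ψ|). -/
theorem null_form_boost_bound :
    ∃ C : ℝ, 0 < C ∧ ∀ (φ ψ : ℝ × E3 → ℝ), ContDiff ℝ (⊤ : ℕ∞) φ → ContDiff ℝ (⊤ : ℕ∞) ψ →
      ∀ p : ℝ × E3, 0 < p.1 →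
      |(-(pt φ p * pt ψ p) + ∑ a, px a φ p * px a ψ p)| ≤
        C * (1 / p.1) * (|pt φ p| * |L0 ψ p| + ∑ a, |La a φ p| * |px a ψ p|) := by
  refine ⟨1, one_pos, fun φ ψ _ _ p hp => ?_⟩
  have key : p.1 * (-(pt φ p * pt ψ p) + ∑ a, px a φ p * px a ψ p)
      = -(pt φ p * L0 ψ p) + ∑ a, La a φ p * px a ψ p := by
    simp only [L0, La, Fin.sum_univ_three]
    ring
  have h1 : |(-(pt φ p * pt ψ p) + ∑ a, px a φ p * px a ψ p)|
      = (1 / p.1) * |(-(pt φ p * L0 ψ p) + ∑ a, La a φ p * px a ψ p)| := by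
    rw [← key, abs_mul, abs_of_pos hp]
    field_simp
  rw [h1, one_mul]
  refine mul_le_mul_of_nonneg_left ?_ (by positivity)
  calc |(-(pt φ p * L0 ψ p) + ∑ a, La a φ p * px a ψ p)|
      ≤ |(-(pt φ p * L0 ψ p))| + |∑ a, La a φ p * px a ψ p| := abs_add_le _ _
    _ ≤ |pt φ p| * |L0 ψ p| + ∑ a, |La a φ p| * |px a ψ p| := by
        gcongr
        · rw [abs_neg, abs_mul]
        · exact (Finset.abs_sum_le_sum_abs _ _).trans (le_of_eq (by simp [abs_mul]))
end
end

section
/- Weighted Hardy inequality in the exterior region: let Λ ≥ 2 and t ≥ 2. For any smooth function u on Σ_t^{ex} = {x ∈ R³ : |x| ≥ t-1} decaying sufficiently fast at infinity with ∫_{Σ_t^{ex}} (2+r-t)^Λ u² dx < ∞, one has ∫_{Σ_t^{ex}} (2+r-t)^Λ u² dx ≲ ∫_{Σ_t^{ex}} (2+r-t)^{Λ+2} |∂_r u|² dx, where r = |x| and ∂_r u = (x^a/r)∂_a u. -/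
open MeasureTheory

noncomputable section

/-- spatial derivative ∂_a -/
def pxs (a : Fin 3) (u : E3 → ℝ) (x : E3) : ℝ :=
  fderiv ℝ u x (EuclideanSpace.single a 1)

/-- radial derivative ∂_r u = (xᵃ/r) ∂_a u -/
def prs (u : E3 → ℝ) (x : E3) : ℝ := ∑ a, (x a / ‖x‖) * pxs a u x

section helpers
open Set Metric Filter intervalIntegral
open scoped ENNReal Topology

lemma lintegral_polar (f : E3 → ℝ≥0∞) (hf : Measurable f) :
    ∫⁻ x, f x = ∫⁻ ω : sphere (0:E3) 1,
      ∫⁻ r in Ioi (0:ℝ), ENNReal.ofReal (r^2) * f (r • (ω:E3)) ∂volume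
      ∂((volume : Measure E3).toSphere) := by
  have hdim : Module.finrank ℝ E3 = 3 := finrank_euclideanSpace_fin
  have hmp := (volume : Measure E3).measurePreserving_homeomorphUnitSphereProd
  rw [hdim] at hmp
  have hFmeas : Measurable fun p : sphere (0:E3) 1 × Ioi (0:ℝ) => f ((p.2 : ℝ) • (p.1 : E3)) := by
    apply hf.comp
    exact Continuous.measurable <| Continuous.smul
      (show Continuous fun p : sphere (0:E3) 1 × Ioi (0:ℝ) => (p.2 : ℝ) by fun_prop)
      (show Continuous fun p : sphere (0:E3) 1 × Ioi (0:ℝ) => (p.1 : E3) by fun_prop)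
  calc ∫⁻ x, f x ∂(volume : Measure E3)
      = ∫⁻ x in ({0}ᶜ : Set E3), f x ∂volume := by
        rw [MeasureTheory.restrict_compl_singleton]
    _ = ∫⁻ x : ({0}ᶜ : Set E3), f x ∂((volume : Measure E3).comap Subtype.val) := by
        rw [lintegral_subtype_comap (measurableSet_singleton (0:E3)).compl]
    _ = ∫⁻ p : sphere (0:E3) 1 × Ioi (0:ℝ), f ((p.2 : ℝ) • (p.1 : E3))
          ∂((volume : Measure E3).toSphere.prod (Measure.volumeIoiPow 2)) := by
        rw [← hmp.lintegral_comp hFmeas]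
        refine lintegral_congr fun x => ?_
        simp only [homeomorphUnitSphereProd_apply_snd_coe,
          homeomorphUnitSphereProd_apply_fst_coe]
        rw [smul_inv_smul₀ (norm_ne_zero_iff.2 x.2)]
    _ = ∫⁻ ω : sphere (0:E3) 1, ∫⁻ r : Ioi (0:ℝ), f ((r : ℝ) • (ω : E3))
          ∂(Measure.volumeIoiPow 2) ∂((volume : Measure E3).toSphere) := by
        rw [lintegral_prod _ hFmeas.aemeasurable]
    _ = _ := by
        refine lintegral_congr fun ω => ?_
        have hg : Measurable fun r : Ioi (0:ℝ) => f ((r : ℝ) • (ω : E3)) :=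
          hf.comp (by fun_prop)
        rw [Measure.volumeIoiPow, lintegral_withDensity_eq_lintegral_mul _
          (f := fun r : Ioi (0:ℝ) => ENNReal.ofReal ((r:ℝ) ^ 2)) (by fun_prop) hg,
          ← lintegral_subtype_comap measurableSet_Ioi
            (fun r : ℝ => ENNReal.ofReal (r ^ 2) * f (r • (ω:E3)))]
        rfl

set_option maxHeartbeats 1000000 in
lemma hardy_core (Λ a : ℝ) (hΛ : 2 ≤ Λ) (ha : 1 ≤ a) (g g' : ℝ → ℝ)
    (hg : ∀ r, HasDerivAt g (g' r) r) (hg' : Continuous g')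
    (hA : IntegrableOn (fun r => (1 + r - a) ^ Λ * g r ^ 2 * r ^ 2) (Ioi a))
    (hB : IntegrableOn (fun r => (1 + r - a) ^ (Λ + 2) * g' r ^ 2 * r ^ 2) (Ioi a)) :
    ∫ r in Ioi a, (1 + r - a) ^ Λ * g r ^ 2 * r ^ 2 ≤
      ∫ r in Ioi a, (1 + r - a) ^ (Λ + 2) * g' r ^ 2 * r ^ 2 := by
  have hgc : Continuous g := by
    have : Differentiable ℝ g := fun r => (hg r).differentiableAt
    exact this.continuous
  obtain ⟨c, hc⟩ : ∃ c : ℝ, c = Λ + 1 := ⟨_, rfl⟩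
  have hc3 : (3:ℝ) ≤ c := by rw [hc]; linarith
  have hc0 : (0:ℝ) < c := by linarith
  have hcne : c ≠ 0 := hc0.ne'
  obtain ⟨w, hw⟩ : ∃ w : ℝ → ℝ, w = fun r => 1 + r - a := ⟨_, rfl⟩
  obtain ⟨φ, hφ⟩ : ∃ φ : ℝ → ℝ, φ = fun r => w r ^ Λ * g r ^ 2 * r ^ 2 := ⟨_, rfl⟩
  obtain ⟨ψ, hψ⟩ : ∃ ψ : ℝ → ℝ, ψ = fun r => w r ^ (Λ + 2) * g' r ^ 2 * r ^ 2 := ⟨_, rfl⟩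
  obtain ⟨h, hh⟩ : ∃ h : ℝ → ℝ, h = fun r => w r ^ (Λ + 1) * r ^ 2 / c * g r ^ 2 := ⟨_, rfl⟩
  obtain ⟨h', hh'⟩ : ∃ h' : ℝ → ℝ, h' = fun r =>
      ((c * w r ^ Λ * r ^ 2 + w r ^ (Λ + 1) * (2 * r)) / c) * g r ^ 2
        + w r ^ (Λ + 1) * r ^ 2 / c * (2 * g r * g' r) := ⟨_, rfl⟩
  have hA' : IntegrableOn φ (Ioi a) := by rw [hφ, hw]; exact hA
  have hB' : IntegrableOn ψ (Ioi a) := by rw [hψ, hw]; exact hB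
  have hgoal : (∫ r in Ioi a, φ r) ≤ ∫ r in Ioi a, ψ r →
      (∫ r in Ioi a, (1 + r - a) ^ Λ * g r ^ 2 * r ^ 2) ≤
        ∫ r in Ioi a, (1 + r - a) ^ (Λ + 2) * g' r ^ 2 * r ^ 2 := by
    rw [hφ, hψ, hw]; exact fun e => e
  apply hgoal
  -- positivity of w on Ici a
  have hwpos : ∀ r ∈ Ici a, (0:ℝ) < w r := fun r hr => by
    rw [hw]; simp only [mem_Ici] at hr; dsimp only; linarith
  -- derivative of w
  have hwd : ∀ r : ℝ, HasDerivAt w 1 r := fun r => by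
    rw [hw]; simpa using ((hasDerivAt_id r).const_add 1).sub_const a
  -- Step 1: h has derivative h' on Ici a
  have hderiv : ∀ r ∈ Ici a, HasDerivAt h (h' r) r := by
    intro r hr
    have hwne : w r ≠ 0 := (hwpos r hr).ne'
    have d1 : HasDerivAt (fun s => w s ^ (Λ + 1)) ((Λ + 1) * w r ^ Λ * 1) r := by
      have := (hwd r).rpow_const (p := Λ + 1) (Or.inl hwne)
      simpa [add_sub_cancel_right] using this
    have d2 : HasDerivAt (fun s : ℝ => s ^ 2) (2 * r) r := by
      simpa using hasDerivAt_pow 2 r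
    have d3 : HasDerivAt (fun s => w s ^ (Λ + 1) * s ^ 2)
        ((Λ + 1) * w r ^ Λ * 1 * r ^ 2 + w r ^ (Λ + 1) * (2 * r)) r := d1.mul d2
    have d4 : HasDerivAt (fun s => w s ^ (Λ + 1) * s ^ 2 / c)
        (((Λ + 1) * w r ^ Λ * 1 * r ^ 2 + w r ^ (Λ + 1) * (2 * r)) / c) r := d3.div_const c
    have d5 : HasDerivAt (fun s => g s ^ 2) (2 * g r ^ 1 * g' r) r := (hg r).pow 2
    have d6 := d4.mul d5
    rw [hh, hh']
    refine d6.congr_deriv ?_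
    rw [hc]
    ring
  -- Step 2: pointwise inequality on Ici a
  have hpt : ∀ r ∈ Ici a, φ r ≤ h' r + (1/2) * φ r + (2 / c ^ 2) * ψ r := by
    intro r hr
    have hwr := hwpos r hr
    have hr1 : (1:ℝ) ≤ r := le_trans ha hr
    have hp : (0:ℝ) ≤ w r ^ Λ := Real.rpow_nonneg hwr.le Λ
    have e1 : w r ^ (Λ + 1) = w r ^ Λ * w r := by
      rw [Real.rpow_add hwr, Real.rpow_one]
    have e2 : w r ^ (Λ + 2) = w r ^ Λ * w r ^ 2 := by
      rw [Real.rpow_add hwr]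
      norm_num [Real.rpow_two]
    have expand : h' r + (1/2) * φ r + (2 / c ^ 2) * ψ r - φ r
        = (2 / c) * (w r ^ Λ) * w r * r * g r ^ 2
          + (w r ^ Λ) * r ^ 2 * ((1/2) * (g r + (2 / c) * (w r * g' r)) ^ 2) := by
      simp only [hφ, hψ, hh', e1, e2]
      field_simp
      ring
    nlinarith [mul_nonneg (mul_nonneg (mul_nonneg (mul_nonneg
        (by positivity : (0:ℝ) ≤ 2 / c) hp) hwr.le) (by linarith : (0:ℝ) ≤ r)) (sq_nonneg (g r)),
      mul_nonneg (mul_nonneg hp (sq_nonneg r)) (mul_nonneg (by norm_num : (0:ℝ) ≤ (1:ℝ)/2)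
        (sq_nonneg (g r + (2 / c) * (w r * g' r))))]
  -- continuity
  have hΛ0 : (0:ℝ) ≤ Λ := by linarith
  have hwC : Continuous w := by rw [hw]; fun_prop
  have crpow : ∀ p : ℝ, 0 ≤ p → Continuous (fun r => w r ^ p) := fun p hp =>
    hwC.rpow_const (fun x => Or.inr hp)
  have cφ : Continuous φ := by
    rw [hφ]; exact ((crpow Λ hΛ0).mul (hgc.pow 2)).mul (continuous_pow 2)
  have cψ : Continuous ψ := by
    rw [hψ]; exact ((crpow (Λ+2) (by linarith)).mul (hg'.pow 2)).mul (continuous_pow 2)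
  have ch : Continuous h := by
    rw [hh]
    exact (((crpow (Λ+1) (by linarith)).mul (continuous_pow 2)).div_const c).mul (hgc.pow 2)
  have ch' : Continuous h' := by
    rw [hh']
    apply Continuous.add
    · exact ((((continuous_const.mul (crpow Λ hΛ0)).mul (continuous_pow 2)).add
        ((crpow (Λ+1) (by linarith)).mul (continuous_const.mul continuous_id))).div_const c).mul
        (hgc.pow 2)
    · exact (((crpow (Λ+1) (by linarith)).mul (continuous_pow 2)).div_const c).mul
        ((continuous_const.mul hgc).mul hg')
  have hψ0 : 0 ≤ᵐ[volume.restrict (Ioi a)] ψ := by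
    filter_upwards [ae_restrict_mem measurableSet_Ioi] with x hx
    have hwx : 0 < w x := hwpos x (Ioi_subset_Ici_self hx)
    have h1 : (0:ℝ) ≤ w x ^ (Λ + 2) := Real.rpow_nonneg hwx.le _
    rw [hψ]; dsimp only; positivity
  have hB0 : 0 ≤ ∫ r in Ioi a, ψ r := by
    refine setIntegral_nonneg_ae measurableSet_Ioi ?_
    filter_upwards [] with x
    intro hx
    have hwx : 0 < w x := hwpos x (Ioi_subset_Ici_self hx)
    have h1 : (0:ℝ) ≤ w x ^ (Λ + 2) := Real.rpow_nonneg hwx.le _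
    rw [hψ]; dsimp only; positivity
  -- Step: main interval inequality
  have main : ∀ R, a ≤ R → (∫ r in a..R, φ r) / 2 ≤ h R + (2 / c ^ 2) * ∫ r in Ioi a, ψ r := by
    intro R hR
    have ftc : ∫ r in a..R, h' r = h R - h a := by
      refine intervalIntegral.integral_eq_sub_of_hasDerivAt (fun x hx => ?_)
        (ch'.intervalIntegrable a R)
      rw [uIcc_of_le hR] at hx
      exact hderiv x hx.1
    have mono : (∫ r in a..R, φ r) ≤
        ∫ r in a..R, (h' r + ((1/2) * φ r + (2 / c ^ 2) * ψ r)) := by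
      refine intervalIntegral.integral_mono_on hR (cφ.intervalIntegrable a R)
        ((ch'.add ((continuous_const.mul cφ).add (continuous_const.mul cψ))).intervalIntegrable a R)
        (fun x hx => ?_)
      have := hpt x hx.1
      linarith
    have hsplit : (∫ r in a..R, (h' r + ((1/2) * φ r + (2 / c ^ 2) * ψ r)))
        = (∫ r in a..R, h' r) + ((1/2) * ∫ r in a..R, φ r) + ((2 / c ^ 2) * ∫ r in a..R, ψ r) := by
      rw [intervalIntegral.integral_add (f := h') (g := fun r => (1/2) * φ r + (2 / c ^ 2) * ψ r)
          (ch'.intervalIntegrable a R)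
        (((continuous_const.mul cφ).add (continuous_const.mul cψ)).intervalIntegrable a R),
        intervalIntegral.integral_add (f := fun r => (1/2) * φ r) (g := fun r => (2 / c ^ 2) * ψ r)
          ((continuous_const.mul cφ).intervalIntegrable a R)
          ((continuous_const.mul cψ).intervalIntegrable a R),
        intervalIntegral.integral_const_mul, intervalIntegral.integral_const_mul]
      ring
    have hha : 0 ≤ h a := by
      have hwa : w a = 1 := by rw [hw]; ring
      rw [hh]; dsimp only; rw [hwa, Real.one_rpow]
      positivity
    have hBR : (∫ r in a..R, ψ r) ≤ ∫ r in Ioi a, ψ r := by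
      rw [intervalIntegral.integral_of_le hR]
      exact setIntegral_mono_set hB' hψ0 (HasSubset.Subset.eventuallyLE Ioc_subset_Ioi_self)
    have hcoef : (0:ℝ) ≤ 2 / c ^ 2 := by positivity
    have hmul := mul_le_mul_of_nonneg_left hBR hcoef
    rw [hsplit, ftc] at mono
    linarith
  -- Step: frequently small boundary term
  have hfreq : ∀ δ : ℝ, 0 < δ → ∃ᶠ R in atTop, h R ≤ δ := by
    intro δ hδ
    by_contra hcon
    rw [not_frequently] at hcon
    have hev : ∀ᶠ R in atTop, δ < h R ∧ max a 1 < R :=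
      (hcon.mono fun R hR => lt_of_not_ge hR).and (eventually_gt_atTop _)
    obtain ⟨M, hM⟩ := eventually_atTop.1 hev
    obtain ⟨M₀, hM₀⟩ : ∃ M₀ : ℝ, M₀ = max M (a + 1) := ⟨_, rfl⟩
    have hM₀a : a < M₀ := by rw [hM₀]; exact lt_of_lt_of_le (by linarith) (le_max_right _ _)
    have hM₀pos : 0 < M₀ := by linarith
    have hsub : IntegrableOn φ (Ioi M₀) volume := hA'.mono_set (Ioi_subset_Ioi hM₀a.le)
    have hbound : ∀ r ∈ Ioi M₀, c * δ * r⁻¹ ≤ φ r := by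
      intro r hr
      have hrM : M ≤ r := le_trans (hM₀ ▸ le_max_left _ _) (le_of_lt hr)
      obtain ⟨hδh, hmax⟩ := hM r hrM
      have hra : a < r := lt_of_le_of_lt (le_max_left a 1) hmax
      have hr1 : (1:ℝ) < r := lt_of_le_of_lt (le_max_right a 1) hmax
      have hwr : 0 < w r := hwpos r hra.le
      have hwler : w r ≤ r := by rw [hw]; dsimp only; linarith
      have e1 : w r ^ (Λ + 1) = w r ^ Λ * w r := by
        rw [Real.rpow_add hwr, Real.rpow_one]
      have hphi : φ r * w r = c * h r := by
        rw [hφ, hh]; dsimp only; rw [e1]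
        field_simp
      have h1 : c * δ < c * h r := (mul_lt_mul_iff_right₀ hc0).2 hδh
      have h01 : (0:ℝ) ≤ c * δ := by positivity
      have h2 : c * δ / r ≤ c * h r / w r := div_le_div₀ (le_trans h01 h1.le) h1.le hwr hwler
      have h3 : c * h r / w r = φ r := by
        rw [← hphi]; field_simp
      rw [div_eq_mul_inv] at h2
      rw [h3] at h2
      exact h2
    have hint : IntegrableOn (fun r => c * δ * r⁻¹) (Ioi M₀) volume := by
      refine Integrable.mono' hsub ?_ ?_
      · exact Measurable.aestronglyMeasurable (by fun_prop)
      · filter_upwards [ae_restrict_mem measurableSet_Ioi] with x hx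
        have hx0 : 0 < x := lt_trans hM₀pos hx
        have hb := hbound x hx
        rw [Real.norm_eq_abs, abs_of_nonneg (by positivity)]
        exact hb
    have hint2 : IntegrableOn (fun r : ℝ => r ^ (-1:ℝ)) (Ioi M₀) volume := by
      have hcd : c * δ ≠ 0 := by positivity
      have hconst := hint.const_mul (c * δ)⁻¹
      refine (integrableOn_congr_fun (fun x hx => ?_) measurableSet_Ioi).2 hconst
      have hx0 : 0 < x := lt_trans hM₀pos hx
      rw [Real.rpow_neg_one]
      field_simp
    rw [integrableOn_Ioi_rpow_iff hM₀pos] at hint2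
    linarith
  -- Step: limit of interval integrals
  have htend : Tendsto (fun R => ∫ r in a..R, φ r) atTop (𝓝 (∫ r in Ioi a, φ r)) := by
    simpa using intervalIntegral_tendsto_integral_Ioi (μ := volume) a hA' tendsto_id
  -- conclude
  have hhalf : (∫ r in Ioi a, φ r) / 2 ≤ (2 / c ^ 2) * ∫ r in Ioi a, ψ r := by
    by_contra hcontra
    push_neg at hcontra
    obtain ⟨ε, hε⟩ : ∃ ε : ℝ, ε = (∫ r in Ioi a, φ r) / 2 - (2 / c ^ 2) * ∫ r in Ioi a, ψ r :=
      ⟨_, rfl⟩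
    have hε0 : 0 < ε := by rw [hε]; linarith
    have hev : ∀ᶠ R in atTop, (∫ r in Ioi a, φ r) - ε < (∫ r in a..R, φ r) ∧ a ≤ R :=
      (htend.eventually (eventually_gt_nhds (by linarith : (∫ r in Ioi a, φ r) - ε
        < ∫ r in Ioi a, φ r))).and (eventually_ge_atTop a)
    obtain ⟨R, hR1, hR2, hR3⟩ := ((hfreq (ε/2) (by linarith)).and_eventually hev).exists
    have hm := main R hR3
    rw [hε] at hR1 hR2
    linarith
  have hc9 : (9:ℝ) ≤ c ^ 2 := by nlinarith
  have h4c : (4:ℝ) / c ^ 2 ≤ 1 := by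
    rw [div_le_one (by nlinarith)]
    linarith
  have e : 2 * ((2 / c ^ 2) * ∫ r in Ioi a, ψ r) = (4 / c ^ 2) * ∫ r in Ioi a, ψ r := by ring
  have h5 := mul_le_of_le_one_left hB0 h4c
  linarith


lemma hardy_rayAx (Λ a : ℝ) (hΛ : 2 ≤ Λ) (ha : 1 ≤ a) (g g' : ℝ → ℝ)
    (hg : ∀ r, HasDerivAt g (g' r) r) (hg' : Continuous g')
    (hfin : (∫⁻ r in Ioi a, ENNReal.ofReal ((1 + r - a) ^ Λ * g r ^ 2 * r ^ 2)) ≠ ⊤) :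
    (∫⁻ r in Ioi a, ENNReal.ofReal ((1 + r - a) ^ Λ * g r ^ 2 * r ^ 2)) ≤
      ∫⁻ r in Ioi a, ENNReal.ofReal ((1 + r - a) ^ (Λ + 2) * g' r ^ 2 * r ^ 2) := by
  by_cases hB : (∫⁻ r in Ioi a, ENNReal.ofReal ((1 + r - a) ^ (Λ + 2) * g' r ^ 2 * r ^ 2)) = ⊤
  · exact hB ▸ le_top
  have hgc : Continuous g := by
    have : Differentiable ℝ g := fun r => (hg r).differentiableAt
    exact this.continuous
  have hwC : Continuous (fun r : ℝ => 1 + r - a) := by fun_prop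
  have crpow : ∀ p : ℝ, 0 ≤ p → Continuous (fun r : ℝ => (1 + r - a) ^ p) := fun p hp =>
    hwC.rpow_const (fun x => Or.inr hp)
  have cφ : Continuous (fun r : ℝ => (1 + r - a) ^ Λ * g r ^ 2 * r ^ 2) :=
    ((crpow Λ (by linarith)).mul (hgc.pow 2)).mul (continuous_pow 2)
  have cψ : Continuous (fun r : ℝ => (1 + r - a) ^ (Λ + 2) * g' r ^ 2 * r ^ 2) :=
    ((crpow (Λ + 2) (by linarith)).mul (hg'.pow 2)).mul (continuous_pow 2)
  have hφ0 : 0 ≤ᵐ[volume.restrict (Ioi a)]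
      (fun r : ℝ => (1 + r - a) ^ Λ * g r ^ 2 * r ^ 2) := by
    filter_upwards [ae_restrict_mem measurableSet_Ioi] with x hx
    have hwx : (0:ℝ) < 1 + x - a := by simp only [mem_Ioi] at hx; linarith
    have h1 : (0:ℝ) ≤ (1 + x - a) ^ Λ := Real.rpow_nonneg hwx.le _
    positivity
  have hψ0 : 0 ≤ᵐ[volume.restrict (Ioi a)]
      (fun r : ℝ => (1 + r - a) ^ (Λ + 2) * g' r ^ 2 * r ^ 2) := by
    filter_upwards [ae_restrict_mem measurableSet_Ioi] with x hx
    have hwx : (0:ℝ) < 1 + x - a := by simp only [mem_Ioi] at hx; linarith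
    have h1 : (0:ℝ) ≤ (1 + x - a) ^ (Λ + 2) := Real.rpow_nonneg hwx.le _
    positivity
  have hAint : IntegrableOn (fun r : ℝ => (1 + r - a) ^ Λ * g r ^ 2 * r ^ 2) (Ioi a) :=
    ⟨cφ.aestronglyMeasurable.restrict, (hasFiniteIntegral_iff_ofReal hφ0).2 hfin.lt_top⟩
  have hBint : IntegrableOn (fun r : ℝ => (1 + r - a) ^ (Λ + 2) * g' r ^ 2 * r ^ 2) (Ioi a) :=
    ⟨cψ.aestronglyMeasurable.restrict, (hasFiniteIntegral_iff_ofReal hψ0).2 (lt_top_iff_ne_top.2 hB)⟩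
  rw [← ofReal_integral_eq_lintegral_ofReal hAint hφ0,
    ← ofReal_integral_eq_lintegral_ofReal hBint hψ0]
  exact ENNReal.ofReal_le_ofReal (hardy_core Λ a hΛ ha g g' hg hg' hAint hBint)

lemma euclid_sum_single (v : E3) : ∑ b, v b • EuclideanSpace.single b (1:ℝ) = v := by
  simpa [EuclideanSpace.basisFun_apply, EuclideanSpace.basisFun_repr] using
    (EuclideanSpace.basisFun (Fin 3) ℝ).sum_repr v

lemma prs_smul_eq (u : E3 → ℝ) (ω : Metric.sphere (0:E3) 1) (r : ℝ) (hr : 0 < r) :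
    prs u (r • (ω:E3)) = (fderiv ℝ u (r • (ω:E3))) (ω:E3) := by
  have hnorm : ‖r • (ω:E3)‖ = r := by
    rw [norm_smul, mem_sphere_zero_iff_norm.1 ω.2, mul_one, Real.norm_eq_abs, abs_of_pos hr]
  have happ : ∀ b : Fin 3, (r • (ω:E3)) b = r * (ω:E3) b := fun b => rfl
  calc prs u (r • (ω:E3))
      = ∑ b, (fderiv ℝ u (r • (ω:E3))) ((ω:E3) b • EuclideanSpace.single b (1:ℝ)) := by
        refine Finset.sum_congr rfl fun b _ => ?_
        rw [ContinuousLinearMap.map_smul, smul_eq_mul, pxs, hnorm, happ b]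
        congr 1
        field_simp
    _ = (fderiv ℝ u (r • (ω:E3))) (∑ b, (ω:E3) b • EuclideanSpace.single b (1:ℝ)) := by
        rw [map_sum]
    _ = _ := by rw [euclid_sum_single]

end helpers

section main
open Set Metric Filter
open scoped ENNReal Topology

/-- weighted Hardy inequality in the exterior region: for Λ ≥ 2, t ≥ 2 and
smooth u on Σ_t^{ex} = {|x| ≥ t-1} with finite weighted L² norm,
∫ (2+r-t)^Λ u² ≲ ∫ (2+r-t)^{Λ+2} |∂_r u|². -/
theorem weighted_hardy_exterior (Λ : ℝ) (hΛ : 2 ≤ Λ) :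
    ∃ C : ℝ, 0 < C ∧ ∀ (t : ℝ), 2 ≤ t → ∀ u : E3 → ℝ, ContDiff ℝ (⊤ : ℕ∞) u →
      (∫⁻ x in {x : E3 | t - 1 ≤ ‖x‖},
          ENNReal.ofReal ((2 + ‖x‖ - t) ^ Λ * (u x) ^ 2)) ≠ ⊤ →
      (∫⁻ x in {x : E3 | t - 1 ≤ ‖x‖},
          ENNReal.ofReal ((2 + ‖x‖ - t) ^ Λ * (u x) ^ 2)) ≤
        ENNReal.ofReal C *
          ∫⁻ x in {x : E3 | t - 1 ≤ ‖x‖},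
            ENNReal.ofReal ((2 + ‖x‖ - t) ^ (Λ + 2) * (prs u x) ^ 2) := by
  refine ⟨1, one_pos, fun t ht u hu hfin => ?_⟩
  obtain ⟨a, hadef⟩ : ∃ a : ℝ, a = t - 1 := ⟨_, rfl⟩
  have ha1 : 1 ≤ a := by rw [hadef]; linarith
  have ha0 : 0 < a := by linarith
  have hS : MeasurableSet {x : E3 | t - 1 ≤ ‖x‖} :=
    measurableSet_le measurable_const measurable_norm
  -- measurability of weights
  have hwc1 : Continuous fun x : E3 => (2 + ‖x‖ - t) ^ Λ :=
    Continuous.rpow_const (by fun_prop) (fun x => Or.inr (by linarith))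
  have hwc2 : Continuous fun x : E3 => (2 + ‖x‖ - t) ^ (Λ + 2) :=
    Continuous.rpow_const (by fun_prop) (fun x => Or.inr (by linarith))
  have hum : Continuous u := hu.continuous
  have hfd : Continuous (fderiv ℝ u) := (hu.continuous_fderiv (by simp))
  have hpxs : ∀ b : Fin 3, Continuous fun x : E3 => pxs b u x := fun b =>
    (ContinuousLinearMap.apply ℝ ℝ (EuclideanSpace.single b (1:ℝ))).continuous.comp hfd
  have hcoord : ∀ b : Fin 3, Measurable fun x : E3 => x b := fun b => by
    fun_prop
  have hprs : Measurable (prs u) := by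
    unfold prs
    refine Finset.measurable_sum _ fun b _ => ?_
    exact ((hcoord b).div measurable_norm).mul (hpxs b).measurable
  have hm₁ : Measurable fun x : E3 => ENNReal.ofReal ((2 + ‖x‖ - t) ^ Λ * u x ^ 2) :=
    ((hwc1.mul (hum.pow 2)).measurable).ennreal_ofReal
  have hm₂ : Measurable fun x : E3 =>
      ENNReal.ofReal ((2 + ‖x‖ - t) ^ (Λ + 2) * prs u x ^ 2) :=
    ((hwc2.measurable).mul (hprs.pow_const 2)).ennreal_ofReal
  -- inner-integral reduction for any f
  have inner_eq : ∀ (f : E3 → ℝ≥0∞), ∀ ω : sphere (0:E3) 1,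
      (∫⁻ r in Ioi (0:ℝ), ENNReal.ofReal (r^2) *
        ({x : E3 | t - 1 ≤ ‖x‖}.indicator f) (r • (ω:E3))) =
      ∫⁻ r in Ioi a, ENNReal.ofReal (r^2) * f (r • (ω:E3)) := by
    intro f ω
    have hnorm : ∀ r : ℝ, 0 < r → ‖r • (ω:E3)‖ = r := fun r hr => by
      rw [norm_smul, mem_sphere_zero_iff_norm.1 ω.2, mul_one, Real.norm_eq_abs, abs_of_pos hr]
    calc (∫⁻ r in Ioi (0:ℝ), ENNReal.ofReal (r^2) *
          ({x : E3 | t - 1 ≤ ‖x‖}.indicator f) (r • (ω:E3)))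
        = ∫⁻ r in Ioi (0:ℝ),
            (Ici a).indicator (fun r => ENNReal.ofReal (r^2) * f (r • (ω:E3))) r := by
          refine setLIntegral_congr_fun measurableSet_Ioi (fun r hr => ?_)
          have hr0 : (0:ℝ) < r := hr
          by_cases hmem : a ≤ r
          · rw [indicator_of_mem (by rw [mem_setOf_eq, hnorm r hr0]; linarith),
              indicator_of_mem (mem_Ici.2 hmem)]
          · rw [indicator_of_notMem (by rw [mem_setOf_eq, hnorm r hr0]; intro h; exact hmem (by linarith)),
              indicator_of_notMem (by simpa using hmem), mul_zero]
      _ = ∫⁻ r in Ici a, ENNReal.ofReal (r^2) * f (r • (ω:E3)) := by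
          have hinter : Ici a ∩ Ioi (0:ℝ) = Ici a :=
            inter_eq_self_of_subset_left (fun x hx => lt_of_lt_of_le ha0 hx)
          rw [lintegral_indicator measurableSet_Ici, Measure.restrict_restrict measurableSet_Ici,
            hinter]
      _ = _ := (setLIntegral_congr (Ioi_ae_eq_Ici (a := a))).symm
  -- polar decompositions
  have hpolar₁ : (∫⁻ x in {x : E3 | t - 1 ≤ ‖x‖},
        ENNReal.ofReal ((2 + ‖x‖ - t) ^ Λ * u x ^ 2)) =
      ∫⁻ ω : sphere (0:E3) 1,
        (∫⁻ r in Ioi a, ENNReal.ofReal ((1 + r - a) ^ Λ * u (r • (ω:E3)) ^ 2 * r ^ 2))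
        ∂((volume : Measure E3).toSphere) := by
    rw [← lintegral_indicator hS, lintegral_polar _ (hm₁.indicator hS)]
    refine lintegral_congr fun ω => ?_
    rw [inner_eq]
    refine setLIntegral_congr_fun measurableSet_Ioi (fun r hr => ?_)
    have hr0 : (0:ℝ) < r := lt_trans ha0 hr
    have hnorm : ‖r • (ω:E3)‖ = r := by
      rw [norm_smul, mem_sphere_zero_iff_norm.1 ω.2, mul_one, Real.norm_eq_abs, abs_of_pos hr0]
    rw [← ENNReal.ofReal_mul (by positivity : (0:ℝ) ≤ r^2), hnorm]
    congr 1
    have : 2 + r - t = 1 + r - a := by rw [hadef]; ring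
    rw [this]; ring
  have hpolar₂ : (∫⁻ x in {x : E3 | t - 1 ≤ ‖x‖},
        ENNReal.ofReal ((2 + ‖x‖ - t) ^ (Λ + 2) * prs u x ^ 2)) =
      ∫⁻ ω : sphere (0:E3) 1,
        (∫⁻ r in Ioi a, ENNReal.ofReal ((1 + r - a) ^ (Λ + 2)
          * ((fderiv ℝ u (r • (ω:E3))) (ω:E3)) ^ 2 * r ^ 2))
        ∂((volume : Measure E3).toSphere) := by
    rw [← lintegral_indicator hS, lintegral_polar _ (hm₂.indicator hS)]
    refine lintegral_congr fun ω => ?_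
    rw [inner_eq]
    refine setLIntegral_congr_fun measurableSet_Ioi (fun r hr => ?_)
    have hr0 : (0:ℝ) < r := lt_trans ha0 hr
    have hnorm : ‖r • (ω:E3)‖ = r := by
      rw [norm_smul, mem_sphere_zero_iff_norm.1 ω.2, mul_one, Real.norm_eq_abs, abs_of_pos hr0]
    rw [← ENNReal.ofReal_mul (by positivity : (0:ℝ) ≤ r^2), hnorm, prs_smul_eq u ω r hr0]
    congr 1
    have : 2 + r - t = 1 + r - a := by rw [hadef]; ring
    rw [this]; ring
  -- measurability of the inner integral as a function of ω
  have hJmeas : Measurable fun ω : sphere (0:E3) 1 =>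
      ∫⁻ r in Ioi a, ENNReal.ofReal ((1 + r - a) ^ Λ * u (r • (ω:E3)) ^ 2 * r ^ 2) := by
    have hcont : Continuous fun p : sphere (0:E3) 1 × ℝ =>
        ENNReal.ofReal ((1 + p.2 - a) ^ Λ * u (p.2 • (p.1:E3)) ^ 2 * p.2 ^ 2) := by
      refine ENNReal.continuous_ofReal.comp ?_
      refine Continuous.mul (Continuous.mul ?_ ?_) ?_
      · exact (Continuous.rpow_const (by fun_prop) (fun p => Or.inr (by linarith)))
      · exact (hum.comp (Continuous.smul (show Continuous fun p : sphere (0:E3) 1 × ℝ => p.2 by fun_prop)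
          (show Continuous fun p : sphere (0:E3) 1 × ℝ => (p.1:E3) by fun_prop))).pow 2
      · fun_prop
    exact hcont.measurable.lintegral_prod_right'
  -- finiteness a.e.
  rw [hpolar₁] at hfin ⊢
  rw [hpolar₂]
  have hae := ae_lt_top hJmeas hfin
  rw [ENNReal.ofReal_one, one_mul]
  refine lintegral_mono_ae (hae.mono fun ω hω => ?_)
  have hg : ∀ r : ℝ, HasDerivAt (fun s => u (s • (ω:E3))) ((fderiv ℝ u (r • (ω:E3))) (ω:E3)) r := by
    intro r
    have h1 : HasDerivAt (fun s : ℝ => s • (ω:E3)) ((ω:E3)) r := by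
      simpa using (hasDerivAt_id r).smul_const (ω:E3)
    exact ((hu.differentiable (by simp)) (r • (ω:E3))).hasFDerivAt.comp_hasDerivAt r h1
  have hg' : Continuous fun r : ℝ => (fderiv ℝ u (r • (ω:E3))) (ω:E3) := by
    have : Continuous fun r : ℝ => fderiv ℝ u (r • (ω:E3)) :=
      hfd.comp (by fun_prop)
    exact (ContinuousLinearMap.apply ℝ ℝ ((ω:E3))).continuous.comp this
  exact hardy_rayAx Λ a hΛ ha1 _ _ hg hg' hω.ne

end main
end
end

section
/- The good derivative weighted energy identity: for a smooth function u on R^{1+3}, δ ≥ 0, a smooth positive weight ω(r-t), and F = -□u + m²u (with □ = -∂_t² + Δ), one has ∂_t(t^{-δ} ω (|∂u|² + m²u²)) - 2∂_a(t^{-δ} ω ∂_t u ∂^a u) + t^{-δ} ω'(r-t)(|Gu|² + m²u²) + δ t^{-δ-1} ω (|∂u|² + m²u²) = 2 t^{-δ} ω ∂_t u F, where G_a u = ∂_a u + (x_a/r)∂_t u and |Gu|² = Σ_a |G_a u|². -/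
noncomputable section

/-- energy density |∂u|² + m²u² -/
def ed (m : ℝ) (u : ℝ × E3 → ℝ) (q : ℝ × E3) : ℝ :=
  (pt u q) ^ 2 + (∑ a, (px a u q) ^ 2) + m ^ 2 * (u q) ^ 2

/-- |Gu|² = Σ_a |∂_a u + (x_a/r)∂_t u|² -/
def Gsq (u : ℝ × E3 → ℝ) (q : ℝ × E3) : ℝ :=
  ∑ a, (px a u q + q.2 a / ‖q.2‖ * pt u q) ^ 2

-- commutation of second derivatives
lemma symm_snd (u : ℝ × E3 → ℝ) (hu : ContDiff ℝ (⊤ : ℕ∞) u) (p : ℝ × E3) (v w : ℝ × E3) :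
    fderiv ℝ (fun q => fderiv ℝ u q v) p w = fderiv ℝ (fun q => fderiv ℝ u q w) p v := by
  have hsym := (hu.contDiffAt (x := p)).isSymmSndFDerivAt (n := (⊤ : ℕ∞)) (by simpa using (WithTop.coe_le_coe.mpr (le_top : (2:ℕ∞) ≤ ⊤)))
  have hdf : DifferentiableAt ℝ (fderiv ℝ u) p :=
    ((hu.fderiv_right (WithTop.coe_le_coe.mpr le_top)).differentiable one_ne_zero).differentiableAt
  have h1 : ∀ z : ℝ × E3, fderiv ℝ (fun q => fderiv ℝ u q z) p
      = (fderiv ℝ (fderiv ℝ u) p).flip z := by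
    intro z
    rw [show (fun q => fderiv ℝ u q z) = fun q => (fderiv ℝ u q) ((fun _ => z) q) from rfl,
      fderiv_clm_apply hdf (differentiableAt_const z)]
    simp
  rw [h1, h1]
  exact hsym w v


set_option maxHeartbeats 2000000 in
/-- the good-derivative weighted energy identity
∂_t(t^{-δ} ω (|∂u|²+m²u²)) - 2∂_a(t^{-δ} ω ∂_t u ∂^a u)
 + t^{-δ} ω'(r-t)(|Gu|²+m²u²) + δ t^{-δ-1} ω (|∂u|²+m²u²) = 2 t^{-δ} ω ∂_t u F,
with F = -□u + m²u = ∂_t²u - Δu + m²u and weight ω = ω(r-t). -/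
theorem weighted_energy_identity (δ m : ℝ) (hδ : 0 ≤ δ)
    (ω : ℝ → ℝ) (hω : ContDiff ℝ (⊤ : ℕ∞) ω) (hωpos : ∀ z, 0 < ω z)
    (u : ℝ × E3 → ℝ) (hu : ContDiff ℝ (⊤ : ℕ∞) u)
    (p : ℝ × E3) (ht : 0 < p.1) (hx : p.2 ≠ 0) :
    pt (fun q => q.1 ^ (-δ) * ω (‖q.2‖ - q.1) * ed m u q) p
      - 2 * ∑ a, px a (fun q => q.1 ^ (-δ) * ω (‖q.2‖ - q.1) * (pt u q * px a u q)) p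
      + p.1 ^ (-δ) * deriv ω (‖p.2‖ - p.1) * (Gsq u p + m ^ 2 * (u p) ^ 2)
      + δ * p.1 ^ (-δ - 1) * ω (‖p.2‖ - p.1) * ed m u p
    = 2 * p.1 ^ (-δ) * ω (‖p.2‖ - p.1) * pt u p *
        (pt (pt u) p - (∑ a, px a (px a u) p) + m ^ 2 * u p) := by
  classical
  have hr : (0:ℝ) < ‖p.2‖ := norm_pos_iff.mpr hx
  have hsum : ∑ a, (p.2 a) ^ 2 = ‖p.2‖ ^ 2 := by
    rw [EuclideanSpace.norm_eq, Real.sq_sqrt (by positivity)]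
    simp [Real.norm_eq_abs, sq_abs]
  -- smoothness of first derivatives
  have hDu : DifferentiableAt ℝ u p := (hu.differentiable (by simp)).differentiableAt
  have hpt : ContDiff ℝ (⊤ : ℕ∞) (pt u) := (hu.fderiv_right (by simp)).clm_apply contDiff_const
  have hpx : ∀ a : Fin 3, ContDiff ℝ (⊤ : ℕ∞) (px a u) := fun a =>
    (hu.fderiv_right (by simp)).clm_apply contDiff_const
  have hDpt : DifferentiableAt ℝ (pt u) p := (hpt.differentiable (by simp)).differentiableAt
  have hDpx : ∀ a, DifferentiableAt ℝ (px a u) p := fun a =>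
    ((hpx a).differentiable (by simp)).differentiableAt
  -- derivative of t^(-δ)
  have hA : HasFDerivAt (fun q : ℝ × E3 => q.1 ^ (-δ))
      ((-δ * p.1 ^ (-δ - 1)) • ContinuousLinearMap.fst ℝ ℝ E3) p :=
    (Real.hasDerivAt_rpow_const (x := p.1) (p := -δ) (Or.inl ht.ne')).comp_hasFDerivAt p
      (hasFDerivAt_fst (𝕜 := ℝ) (p := p))
  -- derivative of the norm
  set Nmap : (ℝ × E3) →L[ℝ] ℝ := ‖p.2‖⁻¹ • ∑ a, p.2 a • ((EuclideanSpace.proj (𝕜 := ℝ) a).comp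
      (ContinuousLinearMap.snd ℝ ℝ E3)) with hNdef
  have hNorm : HasFDerivAt (fun q : ℝ × E3 => ‖q.2‖) Nmap p := by
    have hS : (fun q : ℝ × E3 => ‖q.2‖) = (Real.sqrt ∘ fun q : ℝ × E3 => ∑ a, (q.2 a) ^ 2) := by
      funext q
      rw [Function.comp_apply, EuclideanSpace.norm_eq]; congr 1
      simp [Real.norm_eq_abs, sq_abs]
    have hQ : HasFDerivAt (fun q : ℝ × E3 => ∑ a, (q.2 a) ^ 2)
        (∑ a, (2 * p.2 a) • ((EuclideanSpace.proj (𝕜 := ℝ) a).comp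
          (ContinuousLinearMap.snd ℝ ℝ E3))) p := by
      apply HasFDerivAt.fun_sum
      intro a _
      have h1 : HasFDerivAt (fun q : ℝ × E3 => q.2 a)
          ((EuclideanSpace.proj (𝕜 := ℝ) a).comp (ContinuousLinearMap.snd ℝ ℝ E3)) p :=
        ((EuclideanSpace.proj (𝕜 := ℝ) a).comp (ContinuousLinearMap.snd ℝ ℝ E3)).hasFDerivAt
      simpa [Function.comp_def] using (hasDerivAt_pow 2 (p.2 a)).comp_hasFDerivAt p h1
    have hsq := (Real.hasDerivAt_sqrt (x := ∑ a, (p.2 a) ^ 2)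
      (by rw [hsum]; positivity)).comp_hasFDerivAt p hQ
    have hL : (1 / (2 * Real.sqrt (∑ a, (p.2 a) ^ 2))) •
        (∑ a, (2 * p.2 a) • ((EuclideanSpace.proj (𝕜 := ℝ) a).comp
          (ContinuousLinearMap.snd ℝ ℝ E3))) = Nmap := by
      rw [hsum, Real.sqrt_sq hr.le, hNdef]
      ext v
      · simp
      · simp [Finset.mul_sum]
        exact Finset.sum_congr rfl fun a _ => by ring
    rw [hS]
    rw [← hL]
    exact hsq
  -- derivative of ω (r - t)
  set W' : ℝ := deriv ω (‖p.2‖ - p.1) with hW'def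
  have hW : HasFDerivAt (fun q : ℝ × E3 => ω (‖q.2‖ - q.1))
      (W' • (Nmap - ContinuousLinearMap.fst ℝ ℝ E3)) p :=
    ((hω.differentiable (by simp)) (‖p.2‖ - p.1)).hasDerivAt.comp_hasFDerivAt p
      (hNorm.sub (hasFDerivAt_fst (𝕜 := ℝ) (p := p)))
  -- evaluations of base CLMs
  have hN1 : Nmap (1, 0) = 0 := by
    simp [hNdef]
  have hNa : ∀ a : Fin 3, Nmap (0, EuclideanSpace.single a 1) = p.2 a / ‖p.2‖ := by
    intro a
    simp only [hNdef, ContinuousLinearMap.coe_smul', Pi.smul_apply,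
      ContinuousLinearMap.coe_sum', Finset.sum_apply, ContinuousLinearMap.coe_comp',
      Function.comp_apply, ContinuousLinearMap.coe_snd', smul_eq_mul]
    rw [Finset.sum_eq_single a]
    · simp [EuclideanSpace.single_apply, div_eq_inv_mul]
    · intro b _ hba
      simp [EuclideanSpace.single_apply, hba]
    · simp
  -- scalar evaluations of base derivatives
  have hDA : DifferentiableAt ℝ (fun q : ℝ × E3 => q.1 ^ (-δ)) p := hA.differentiableAt
  have hDW : DifferentiableAt ℝ (fun q : ℝ × E3 => ω (‖q.2‖ - q.1)) p := hW.differentiableAt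
  -- derivative of energy density
  have hed : HasFDerivAt (ed m u)
      ((2 * pt u p) • fderiv ℝ (pt u) p + (∑ a, (2 * px a u p) • fderiv ℝ (px a u) p)
        + (m ^ 2 * (2 * u p)) • fderiv ℝ u p) p := by
    have h1 : HasFDerivAt (fun q => pt u q ^ 2) ((2 * pt u p) • fderiv ℝ (pt u) p) p := by
      simpa [Function.comp_def] using (hasDerivAt_pow 2 (pt u p)).comp_hasFDerivAt p hDpt.hasFDerivAt
    have h2 : ∀ a : Fin 3, HasFDerivAt (fun q => px a u q ^ 2)
        ((2 * px a u p) • fderiv ℝ (px a u) p) p := fun a => by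
      simpa [Function.comp_def] using (hasDerivAt_pow 2 (px a u p)).comp_hasFDerivAt p (hDpx a).hasFDerivAt
    have h3 : HasFDerivAt (fun q => m ^ 2 * u q ^ 2) ((m ^ 2 * (2 * u p)) • fderiv ℝ u p) p := by
      have := ((hasDerivAt_pow 2 (u p)).comp_hasFDerivAt p hDu.hasFDerivAt).const_mul (m ^ 2)
      simpa [smul_smul] using this
    exact (h1.add (HasFDerivAt.fun_sum (u := Finset.univ) (fun a _ => h2 a))).add h3
  -- full product derivatives
  have hBIG1 : HasFDerivAt (fun q : ℝ × E3 => q.1 ^ (-δ) * ω (‖q.2‖ - q.1) * ed m u q)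
      ((p.1 ^ (-δ) * ω (‖p.2‖ - p.1)) •
          ((2 * pt u p) • fderiv ℝ (pt u) p + (∑ a, (2 * px a u p) • fderiv ℝ (px a u) p)
            + (m ^ 2 * (2 * u p)) • fderiv ℝ u p)
        + ed m u p • ((p.1 ^ (-δ)) • (W' • (Nmap - ContinuousLinearMap.fst ℝ ℝ E3))
            + ω (‖p.2‖ - p.1) • ((-δ * p.1 ^ (-δ - 1)) • ContinuousLinearMap.fst ℝ ℝ E3))) p :=
    (hA.mul hW).mul hed
  have hBIG2 : ∀ a : Fin 3, HasFDerivAt (fun q : ℝ × E3 =>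
        q.1 ^ (-δ) * ω (‖q.2‖ - q.1) * (fderiv ℝ u q (1, 0) * fderiv ℝ u q (0, EuclideanSpace.single a 1)))
      ((p.1 ^ (-δ) * ω (‖p.2‖ - p.1)) •
          (pt u p • fderiv ℝ (px a u) p + px a u p • fderiv ℝ (pt u) p)
        + (pt u p * px a u p) • ((p.1 ^ (-δ)) • (W' • (Nmap - ContinuousLinearMap.fst ℝ ℝ E3))
            + ω (‖p.2‖ - p.1) • ((-δ * p.1 ^ (-δ - 1)) • ContinuousLinearMap.fst ℝ ℝ E3))) p :=
    fun a => (hA.mul hW).mul (hDpt.hasFDerivAt.mul (hDpx a).hasFDerivAt)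
  have hB2f : ∀ a : Fin 3, fderiv ℝ (fun q : ℝ × E3 =>
        q.1 ^ (-δ) * ω (‖q.2‖ - q.1) * (fderiv ℝ u q (1, 0) * fderiv ℝ u q (0, EuclideanSpace.single a 1))) p
      = ((p.1 ^ (-δ) * ω (‖p.2‖ - p.1)) •
          (pt u p • fderiv ℝ (px a u) p + px a u p • fderiv ℝ (pt u) p)
        + (pt u p * px a u p) • ((p.1 ^ (-δ)) • (W' • (Nmap - ContinuousLinearMap.fst ℝ ℝ E3))
            + ω (‖p.2‖ - p.1) • ((-δ * p.1 ^ (-δ - 1)) • ContinuousLinearMap.fst ℝ ℝ E3))) :=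
    fun a => (hBIG2 a).fderiv
  -- commutation of mixed second derivatives
  have comm : ∀ a : Fin 3, fderiv ℝ (pt u) p (0, EuclideanSpace.single a 1)
      = fderiv ℝ (px a u) p (1, 0) :=
    fun a => symm_snd u hu p (1, 0) (0, EuclideanSpace.single a 1)
  -- expansion of Gsq
  have hGsq : Gsq u p = (∑ a, (fderiv ℝ u p (0, EuclideanSpace.single a 1)) ^ 2)
      + 2 * (∑ a, p.2 a * fderiv ℝ u p (0, EuclideanSpace.single a 1)) * fderiv ℝ u p (1, 0) / ‖p.2‖
      + fderiv ℝ u p (1, 0) ^ 2 := by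
    have hsum3 : p.2 0 ^ 2 + p.2 1 ^ 2 + p.2 2 ^ 2 = ‖p.2‖ ^ 2 := by
      simpa [Fin.sum_univ_three] using hsum
    simp only [Gsq, pt, px, Fin.sum_univ_three]
    field_simp
    linear_combination ((fderiv ℝ u p (1, 0)) ^ 2) * hsum3
  rw [hGsq]
  simp only [pt, px]
  rw [hBIG1.fderiv]
  simp only [hB2f]
  simp only [ContinuousLinearMap.add_apply, ContinuousLinearMap.smul_apply,
    ContinuousLinearMap.sub_apply, ContinuousLinearMap.sum_apply, ContinuousLinearMap.coe_fst',
    smul_eq_mul, hN1, hNa, ed, pt, px, Fin.sum_univ_three]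
  simp only [comm]
  ring
end
end

section
/- For the Morawetz multiplier K_0 = (t²+r²)∂_t + 2t x^a ∂_a in spatial dimension n, with u smooth, the conformal energy density e_con[u] := (t²+r²)|∂u|² + 4tr ∂_t u ∂_r u + 2(n-1)u(t∂_t u + r∂_r u) + (n-1)²u² satisfies e_con[u] = |K_0 u + (n-1)t u|²/(t²+r²) + |(r²-t²)∂_r u + (n-1) r u|²/(t²+r²) + (t²+r²) r^{-2} Σ_{a<b}|Ω_{ab}u|². -/
noncomputable section

/-- radial derivative ∂_r u = (xᵃ/r)∂_a u -/
def prd (u : ℝ × E3 → ℝ) (p : ℝ × E3) : ℝ := ∑ a, (p.2 a / ‖p.2‖) * px a u p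

/-- rotation Ω_{ab} = x_a ∂_b - x_b ∂_a -/
def Om (a b : Fin 3) (u : ℝ × E3 → ℝ) (p : ℝ × E3) : ℝ :=
  p.2 a * px b u p - p.2 b * px a u p

/-- Morawetz multiplier K₀u = (t²+r²)∂_t u + 2t xᵃ∂_a u -/
def K0 (u : ℝ × E3 → ℝ) (p : ℝ × E3) : ℝ :=
  (p.1 ^ 2 + ‖p.2‖ ^ 2) * pt u p + 2 * p.1 * ∑ a, p.2 a * px a u p

private lemma aux_conf (t r P S u n O1 O2 O3 D : ℝ) (hr : r ≠ 0) (htr : t^2+r^2 ≠ 0)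
    (hD : r^2*D = S^2+O1^2+O2^2+O3^2) :
    (t^2+r^2)*(P^2+D) + 4*t*r*(P*(S/r)) + 2*(n-1)*u*(t*P+r*(S/r)) + (n-1)^2*u^2
    = ((t^2+r^2)*P+2*t*S+(n-1)*t*u)^2/(t^2+r^2)
      + ((r^2-t^2)*(S/r)+(n-1)*r*u)^2/(t^2+r^2)
      + (t^2+r^2)/r^2*(O1^2+O2^2+O3^2) := by
  field_simp
  linear_combination ((t^2+r^2)^2) * hD

/-- the conformal energy density
e_con[u] = (t²+r²)|∂u|² + 4tr ∂_t u ∂_r u + 2(n-1)u(t∂_t u + r∂_r u) + (n-1)²u²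
equals |K₀u+(n-1)tu|²/(t²+r²) + |(r²-t²)∂_r u+(n-1)ru|²/(t²+r²) + (t²+r²)r⁻²Σ_{a<b}|Ω_{ab}u|². -/
theorem conformal_energy_density (n : ℝ) (u : ℝ × E3 → ℝ) (hu : ContDiff ℝ (⊤ : ℕ∞) u)
    (p : ℝ × E3) (ht : 0 < p.1) (hx : p.2 ≠ 0) :
    (p.1 ^ 2 + ‖p.2‖ ^ 2) * ((pt u p) ^ 2 + ∑ a, (px a u p) ^ 2)
      + 4 * p.1 * ‖p.2‖ * (pt u p * prd u p)
      + 2 * (n - 1) * u p * (p.1 * pt u p + ‖p.2‖ * prd u p)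
      + (n - 1) ^ 2 * (u p) ^ 2
    = (K0 u p + (n - 1) * p.1 * u p) ^ 2 / (p.1 ^ 2 + ‖p.2‖ ^ 2)
      + ((‖p.2‖ ^ 2 - p.1 ^ 2) * prd u p + (n - 1) * ‖p.2‖ * u p) ^ 2 / (p.1 ^ 2 + ‖p.2‖ ^ 2)
      + (p.1 ^ 2 + ‖p.2‖ ^ 2) / ‖p.2‖ ^ 2 *
          ((Om 0 1 u p) ^ 2 + (Om 0 2 u p) ^ 2 + (Om 1 2 u p) ^ 2) := by
  obtain ⟨t, x⟩ := p
  simp only at ht hx ⊢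
  set r := ‖x‖ with hrdef
  have hr : 0 < r := norm_pos_iff.mpr hx
  have hr2 : r ^ 2 = x 0 ^ 2 + x 1 ^ 2 + x 2 ^ 2 := by
    rw [hrdef, EuclideanSpace.norm_eq, Real.sq_sqrt (by positivity)]
    simp [Fin.sum_univ_three, sq_abs]
  have htr : t ^ 2 + r ^ 2 ≠ 0 := by positivity
  have hrne : r ≠ 0 := ne_of_gt hr
  simp only [pt, px, prd, Om, K0, Fin.sum_univ_three] at *
  set d0 := fderiv ℝ u (t, x) (0, EuclideanSpace.single 0 1)
  set d1 := fderiv ℝ u (t, x) (0, EuclideanSpace.single 1 1)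
  set d2 := fderiv ℝ u (t, x) (0, EuclideanSpace.single 2 1)
  set P := fderiv ℝ u (t, x) (1, 0)
  set S := x 0 * d0 + x 1 * d1 + x 2 * d2 with hS
  have hprd : x 0 / r * d0 + x 1 / r * d1 + x 2 / r * d2 = S / r := by
    rw [hS]; ring
  rw [hprd]
  have hD : r ^ 2 * (d0 ^ 2 + d1 ^ 2 + d2 ^ 2)
      = S ^ 2 + (x 0 * d1 - x 1 * d0) ^ 2 + (x 0 * d2 - x 2 * d0) ^ 2
        + (x 1 * d2 - x 2 * d1) ^ 2 := by
    rw [hS]; linear_combination (d0 ^ 2 + d1 ^ 2 + d2 ^ 2) * hr2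
  have := aux_conf t r P S (u (t, x)) n (x 0 * d1 - x 1 * d0) (x 0 * d2 - x 2 * d0)
    (x 1 * d2 - x 2 * d1) (d0 ^ 2 + d1 ^ 2 + d2 ^ 2) hrne htr hD
  linarith [this]
end
end

section
/- Extra decay of the Klein–Gordon component: for any smooth function v on the interior region D^{in} = {(t,x) : t ≥ 2, |x| < t-1}, the pointwise bound |v| ≲ ((t-r)/t) Σ_{|I|≤1} |∂Γ^I v| + |-□v + v| holds, where Γ ranges over the fields {∂_α, L_a, Ω_{ab}}, ∂ denotes any of the derivatives ∂_α, and □ = -∂_t² + Δ. -/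
noncomputable section

/-- coordinate directions in ℝ × ℝ³ -/
def dir : Fin 4 → ℝ × E3 :=
  ![(1, 0), (0, EuclideanSpace.single 0 1), (0, EuclideanSpace.single 1 1),
    (0, EuclideanSpace.single 2 1)]

/-- the admissible vector fields Γ^I, |I| ≤ 1: the identity, the translations ∂_α,
the Lorentz boosts L_a and the rotations Ω_{ab} -/
def Gam : Fin 11 → (ℝ × E3 → ℝ) → ℝ × E3 → ℝ :=
  ![fun v => v,
    fun v p => fderiv ℝ v p (dir 0),
    fun v p => fderiv ℝ v p (dir 1),
    fun v p => fderiv ℝ v p (dir 2),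
    fun v p => fderiv ℝ v p (dir 3),
    La 0, La 1, La 2,
    Om 0 1, Om 0 2, Om 1 2]

private lemma fderiv_eval' {v : ℝ × E3 → ℝ} (hv : ContDiff ℝ (⊤ : ℕ∞) v) (w u p : ℝ × E3) :
    fderiv ℝ (fun q => fderiv ℝ v q w) p u = fderiv ℝ (fderiv ℝ v) p u w := by
  have hd : DifferentiableAt ℝ (fderiv ℝ v) p :=
    ((hv.fderiv_right (m := (⊤ : ℕ∞)) (by simp)).differentiable (by simp)).differentiableAt
  rw [fderiv_clm_apply hd (differentiableAt_const w)]
  simp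

private lemma fderiv_La' {v : ℝ × E3 → ℝ} (hv : ContDiff ℝ (⊤ : ℕ∞) v) (a : Fin 3) (p u : ℝ × E3) :
    fderiv ℝ (La a v) p u =
      u.2 a * fderiv ℝ v p (1, 0) + p.2 a * fderiv ℝ (fderiv ℝ v) p u (1, 0)
      + (u.1 * fderiv ℝ v p (0, EuclideanSpace.single a 1)
        + p.1 * fderiv ℝ (fderiv ℝ v) p u (0, EuclideanSpace.single a 1)) := by
  have hd : DifferentiableAt ℝ (fderiv ℝ v) p :=
    ((hv.fderiv_right (m := (⊤ : ℕ∞)) (by simp)).differentiable (by simp)).differentiableAt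
  have hpt : DifferentiableAt ℝ (fun q => fderiv ℝ v q (1, 0)) p :=
    hd.clm_apply (differentiableAt_const _)
  have hpx : DifferentiableAt ℝ (fun q => fderiv ℝ v q (0, EuclideanSpace.single a 1)) p :=
    hd.clm_apply (differentiableAt_const _)
  have hXa : DifferentiableAt ℝ (fun q : ℝ × E3 => q.2 a) p :=
    (((EuclideanSpace.proj a).comp (ContinuousLinearMap.snd ℝ ℝ E3)).differentiableAt)
  have hT : DifferentiableAt ℝ (fun q : ℝ × E3 => q.1) p := differentiableAt_fst
  have hXa' : fderiv ℝ (fun q : ℝ × E3 => q.2 a) p u = u.2 a := by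
    rw [show (fun q : ℝ × E3 => q.2 a)
        = ⇑((EuclideanSpace.proj a).comp (ContinuousLinearMap.snd ℝ ℝ E3)) from rfl,
      ContinuousLinearMap.fderiv]
    rfl
  have hT' : fderiv ℝ (fun q : ℝ × E3 => q.1) p u = u.1 := by
    rw [fderiv_fst]; rfl
  have : La a v = fun q => (fun q : ℝ × E3 => q.2 a) q * (fun q => fderiv ℝ v q (1, 0)) q
      + (fun q : ℝ × E3 => q.1) q * (fun q => fderiv ℝ v q (0, EuclideanSpace.single a 1)) q := rfl
  rw [this, fderiv_fun_add (by exact hXa.mul hpt) (by exact hT.mul hpx)]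
  rw [fderiv_fun_mul hXa hpt, fderiv_fun_mul hT hpx]
  simp only [ContinuousLinearMap.add_apply, ContinuousLinearMap.smul_apply, smul_eq_mul]
  rw [hXa', hT', fderiv_eval' hv _ u p, fderiv_eval' hv _ u p]
  ring

private lemma abs_add_le' {a b A B : ℝ} (ha : |a| ≤ A) (hb : |b| ≤ B) : |a + b| ≤ A + B :=
  (abs_add_le a b).trans (add_le_add ha hb)

private lemma term_bound {c b x S : ℝ} (hc : |c| ≤ b) (hx : |x| ≤ S) : |c * x| ≤ b * S := by
  rw [abs_mul]
  exact mul_le_mul hc hx (abs_nonneg _) ((abs_nonneg c).trans hc)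

set_option maxHeartbeats 1000000 in
/-- extra decay of the Klein–Gordon component: on the interior region
D^{in} = {t ≥ 2, |x| < t-1},
|v| ≲ ((t-r)/t) Σ_{|I|≤1} |∂Γ^I v| + |-□v + v|, with □ = -∂_t² + Δ. -/
theorem klein_gordon_extra_decay :
    ∃ C : ℝ, 0 < C ∧ ∀ v : ℝ × E3 → ℝ, ContDiff ℝ (⊤ : ℕ∞) v →
      ∀ p : ℝ × E3, 2 ≤ p.1 → ‖p.2‖ < p.1 - 1 →
      |v p| ≤ C * ((p.1 - ‖p.2‖) / p.1 *
          Real.sqrt (∑ k : Fin 11, ∑ α : Fin 4, (fderiv ℝ (Gam k v) p (dir α)) ^ 2)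
        + |pt (pt v) p - (∑ a, px a (px a v) p) + v p|) := by
  refine ⟨14, by norm_num, ?_⟩
  intro v hv p ht hr
  set T : ℝ := p.1 with hTdef
  set r : ℝ := ‖p.2‖ with hrdef
  have hT0 : (0:ℝ) < T := lt_of_lt_of_le two_pos ht
  have hr0 : (0:ℝ) ≤ r := norm_nonneg _
  have h1 : (1:ℝ) ≤ T - r := by linarith
  set S : ℝ := Real.sqrt (∑ k : Fin 11, ∑ α : Fin 4, (fderiv ℝ (Gam k v) p (dir α)) ^ 2)
    with hSdef
  have hS0 : (0:ℝ) ≤ S := Real.sqrt_nonneg _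
  set D : ℝ := (T - r) / T with hDdef
  have hD0 : (0:ℝ) ≤ D := by positivity
  -- entries are bounded by S
  have hentry : ∀ k : Fin 11, ∀ α : Fin 4, |fderiv ℝ (Gam k v) p (dir α)| ≤ S := by
    intro k α
    rw [hSdef, ← Real.sqrt_sq_eq_abs]
    apply Real.sqrt_le_sqrt
    calc (fderiv ℝ (Gam k v) p (dir α)) ^ 2
        ≤ ∑ β : Fin 4, (fderiv ℝ (Gam k v) p (dir β)) ^ 2 :=
          Finset.single_le_sum (f := fun β => (fderiv ℝ (Gam k v) p (dir β)) ^ 2)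
            (fun i _ => sq_nonneg _) (Finset.mem_univ α)
      _ ≤ ∑ j : Fin 11, ∑ β : Fin 4, (fderiv ℝ (Gam j v) p (dir β)) ^ 2 :=
          Finset.single_le_sum (f := fun j => ∑ β : Fin 4, (fderiv ℝ (Gam j v) p (dir β)) ^ 2)
            (fun i _ => Finset.sum_nonneg fun _ _ => sq_nonneg _) (Finset.mem_univ k)
  -- notation
  set e0 : ℝ × E3 := ((1:ℝ), (0:E3)) with he0
  set e : Fin 3 → ℝ × E3 := fun a => ((0:ℝ), EuclideanSpace.single a 1) with he
  set F := fderiv ℝ (fderiv ℝ v) p with hF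
  set f := fderiv ℝ v p with hf
  have hsym : ∀ u w : ℝ × E3, F u w = F w u := fun u w =>
    (hv.contDiffAt.isSymmSndFDerivAt (by rw [minSmoothness_of_isRCLikeNormedField]; exact WithTop.coe_le_coe.mpr (le_top : (2:ℕ∞) ≤ ⊤))) u w
  -- second derivative identifications
  have hA : pt (pt v) p = F e0 e0 := fderiv_eval' hv e0 e0 p
  have hPx : ∀ a, px a (px a v) p = F (e a) (e a) := fun a => fderiv_eval' hv (e a) (e a) p
  -- La derivatives
  have hB : ∀ a, fderiv ℝ (La a v) p e0
      = p.2 a * F e0 e0 + (f (e a) + T * F e0 (e a)) := by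
    intro a
    rw [fderiv_La' hv a p e0]
    show (0:E3) a * f e0 + p.2 a * F e0 e0 + (1 * f (e a) + T * F e0 (e a))
      = p.2 a * F e0 e0 + (f (e a) + T * F e0 (e a))
    simp
  have hC : ∀ a, fderiv ℝ (La a v) p (e a)
      = f e0 + p.2 a * F e0 (e a) + T * F (e a) (e a) := by
    intro a
    rw [fderiv_La' hv a p (e a)]
    show EuclideanSpace.single a (1:ℝ) a * f e0 + p.2 a * F (e a) e0
        + ((0:ℝ) * f (e a) + T * F (e a) (e a))
      = f e0 + p.2 a * F e0 (e a) + T * F (e a) (e a)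
    rw [hsym (e a) e0]
    simp
  -- coordinates vs norm
  have hr2s : r ^ 2 = ∑ i : Fin 3, (p.2 i) ^ 2 := by
    rw [hrdef, EuclideanSpace.norm_eq, Real.sq_sqrt (by positivity)]
    simp [sq_abs]
  have hr2 : r ^ 2 = (p.2 0) ^ 2 + (p.2 1) ^ 2 + (p.2 2) ^ 2 := by
    rw [hr2s, Fin.sum_univ_three]
  have hXr : ∀ a : Fin 3, |p.2 a| ≤ r := by
    intro a
    rw [← Real.sqrt_sq_eq_abs, ← Real.sqrt_sq hr0]
    apply Real.sqrt_le_sqrt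
    rw [hr2s]
    exact Finset.single_le_sum (f := fun i => (p.2 i) ^ 2)
      (fun i _ => sq_nonneg _) (Finset.mem_univ a)
  -- coefficient bounds
  have hc1 : |(T ^ 2 - r ^ 2) / T ^ 2| ≤ 2 * D := by
    rw [abs_of_nonneg (by apply div_nonneg _ (by positivity); nlinarith)]
    rw [div_le_iff₀ (by positivity), hDdef]
    have : (T - r) / T * T = T - r := div_mul_cancel₀ _ (ne_of_gt hT0)
    nlinarith
  have hc2 : ∀ a : Fin 3, |p.2 a / T ^ 2| ≤ D := by
    intro a
    have habs : |p.2 a / T ^ 2| = |p.2 a| / T ^ 2 := by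
      rw [abs_div, abs_of_pos (show (0:ℝ) < T ^ 2 by positivity)]
    rw [habs, hDdef, div_le_div_iff₀ (by positivity) hT0]
    calc |p.2 a| * T ≤ r * T := mul_le_mul_of_nonneg_right (hXr a) hT0.le
      _ ≤ T * T := mul_le_mul_of_nonneg_right (by linarith) hT0.le
      _ = 1 * T ^ 2 := by ring
      _ ≤ (T - r) * T ^ 2 := mul_le_mul_of_nonneg_right h1 (by positivity)
  have hc3 : |-(1 / T)| ≤ D := by
    rw [abs_neg, abs_of_pos (by positivity), div_le_div_iff₀ hT0 hT0]
    nlinarith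
  have hc4 : |3 / T| ≤ 3 * D := by
    rw [abs_of_pos (by positivity), hDdef, div_le_iff₀ hT0]
    have : (T - r) / T * T = T - r := div_mul_cancel₀ _ (ne_of_gt hT0)
    nlinarith
  -- entry identifications with Gam
  have hGA : |F e0 e0| ≤ S := by
    have h := hentry 1 0
    rwa [show fderiv ℝ (Gam 1 v) p (dir 0) = F e0 e0 from fderiv_eval' hv e0 (dir 0) p] at h
  have hGB0 : |fderiv ℝ (La 0 v) p e0| ≤ S := hentry 5 0
  have hGB1 : |fderiv ℝ (La 1 v) p e0| ≤ S := hentry 6 0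
  have hGB2 : |fderiv ℝ (La 2 v) p e0| ≤ S := hentry 7 0
  have hGC0 : |fderiv ℝ (La 0 v) p (e 0)| ≤ S := hentry 5 1
  have hGC1 : |fderiv ℝ (La 1 v) p (e 1)| ≤ S := hentry 6 2
  have hGC2 : |fderiv ℝ (La 2 v) p (e 2)| ≤ S := hentry 7 3
  have hGP : |f e0| ≤ S := hentry 0 0
  have hGQ0 : |f (e 0)| ≤ S := hentry 0 1
  have hGQ1 : |f (e 1)| ≤ S := hentry 0 2
  have hGQ2 : |f (e 2)| ≤ S := hentry 0 3
  -- the key operator identity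
  have hkey : F e0 e0 - (F (e 0) (e 0) + F (e 1) (e 1) + F (e 2) (e 2))
      = (T ^ 2 - r ^ 2) / T ^ 2 * F e0 e0
        + p.2 0 / T ^ 2 * fderiv ℝ (La 0 v) p e0
        + p.2 1 / T ^ 2 * fderiv ℝ (La 1 v) p e0
        + p.2 2 / T ^ 2 * fderiv ℝ (La 2 v) p e0
        + -(1 / T) * fderiv ℝ (La 0 v) p (e 0)
        + -(1 / T) * fderiv ℝ (La 1 v) p (e 1)
        + -(1 / T) * fderiv ℝ (La 2 v) p (e 2)
        + 3 / T * f e0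
        + -(p.2 0 / T ^ 2) * f (e 0)
        + -(p.2 1 / T ^ 2) * f (e 1)
        + -(p.2 2 / T ^ 2) * f (e 2) := by
    rw [hB 0, hB 1, hB 2, hC 0, hC 1, hC 2, hr2]
    field_simp
    ring
  -- bound the d'Alembertian part
  have hbox : |F e0 e0 - (F (e 0) (e 0) + F (e 1) (e 1) + F (e 2) (e 2))| ≤ 14 * (D * S) := by
    rw [hkey]
    have hn : ∀ a : Fin 3, |-(p.2 a / T ^ 2)| ≤ D := fun a => by rw [abs_neg]; exact hc2 a
    have total := abs_add_le' (abs_add_le' (abs_add_le' (abs_add_le' (abs_add_le' (abs_add_le'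
      (abs_add_le' (abs_add_le' (abs_add_le' (abs_add_le'
        (term_bound hc1 hGA) (term_bound (hc2 0) hGB0)) (term_bound (hc2 1) hGB1))
        (term_bound (hc2 2) hGB2)) (term_bound hc3 hGC0)) (term_bound hc3 hGC1))
        (term_bound hc3 hGC2)) (term_bound hc4 hGP)) (term_bound (hn 0) hGQ0))
        (term_bound (hn 1) hGQ1)) (term_bound (hn 2) hGQ2)
    linarith
  -- conclude
  have hsum : (∑ a, px a (px a v) p) = F (e 0) (e 0) + F (e 1) (e 1) + F (e 2) (e 2) := by
    rw [Fin.sum_univ_three, hPx 0, hPx 1, hPx 2]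
  have hvp : v p = (pt (pt v) p - (∑ a, px a (px a v) p) + v p)
      - (F e0 e0 - (F (e 0) (e 0) + F (e 1) (e 1) + F (e 2) (e 2))) := by
    rw [hA, hsum]; ring
  have htri : |v p| ≤ |pt (pt v) p - (∑ a, px a (px a v) p) + v p| + 14 * (D * S) := by
    calc |v p| = |(pt (pt v) p - (∑ a, px a (px a v) p) + v p)
        - (F e0 e0 - (F (e 0) (e 0) + F (e 1) (e 1) + F (e 2) (e 2)))| := congrArg abs hvp
      _ ≤ |pt (pt v) p - (∑ a, px a (px a v) p) + v p|
          + |F e0 e0 - (F (e 0) (e 0) + F (e 1) (e 1) + F (e 2) (e 2))| := abs_sub _ _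
      _ ≤ |pt (pt v) p - (∑ a, px a (px a v) p) + v p| + 14 * (D * S) :=
          add_le_add le_rfl hbox
  have hKG0 : (0:ℝ) ≤ |pt (pt v) p - (∑ a, px a (px a v) p) + v p| := abs_nonneg _
  have hDS : 0 ≤ D * S := mul_nonneg hD0 hS0
  calc |v p| ≤ |pt (pt v) p - (∑ a, px a (px a v) p) + v p| + 14 * (D * S) := htri
    _ ≤ 14 * (D * S + |pt (pt v) p - (∑ a, px a (px a v) p) + v p|) := by linarith
end
end
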